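/- arXiv:2406.01041 — 2 statements merged into one kernel-verified Lean document; each statement's English description precedes it below -/
import Mathlib

section
/- If D := ∩_{i=1}^m Fix J_i is nonempty, then F_i = D for every i, and the set of cycles Z equals {(z, z, ..., z) : z ∈ D} = D^m ∩ Δ, where Δ is the diagonal of X^m. -/
open Pointwise InnerProductSpace

variable {X : Type*} [NormedAddCommGroup X] [InnerProductSpace ℝ X]
variable {m : ℕ} [NeZero m]

/-- A set-valued operator `A : X ⇉ X` is monotone. -/
def SVMonotone (A : X → Set X) : Prop :=
  ∀ ⦃x y u v : X⦄, u ∈ A x → v ∈ A y → 0 ≤ ⟪x - y, u - v⟫_ℝ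

/-- A set-valued operator is maximally monotone. -/
def SVMaxMonotone (A : X → Set X) : Prop :=
  SVMonotone A ∧ ∀ x u : X, (∀ y v, v ∈ A y → 0 ≤ ⟪x - y, u - v⟫_ℝ) → u ∈ A x

/-- `J` is the (single-valued, full-domain) resolvent `(Id + A)⁻¹` of `A`. -/
def IsResolventOf (J : X → X) (A : X → Set X) : Prop :=
  ∀ x y : X, J y = x ↔ y - x ∈ A x

open Fin.NatCast in
/-- The cyclic composition `J_i ∘ J_{i-1} ∘ ⋯ ∘ J_1 ∘ J_m ∘ ⋯ ∘ J_{i+1}`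
(indices understood cyclically in `Fin m`, `0`-based). -/
def cyclicComp (J : Fin m → X → X) (i : Fin m) : X → X :=
  fun x => (List.range m).foldl (fun y k => J (i + 1 + (k : Fin m)) y) x

/-- `F i` : the fixed point set of the cyclic composition ending with `J i`. -/
def cycFix (J : Fin m → X → X) (i : Fin m) : Set X :=
  {x | cyclicComp J i x = x}

/-- `(z_1, …, z_m)` is a cycle: `z_{i} = J_i z_{i-1}` cyclically. -/
def IsCycle (J : Fin m → X → X) (z : Fin m → X) : Prop :=
  ∀ i : Fin m, z i = J i (z (i - 1))

/-- The circular right-shift operator on `X^m`. -/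
def shiftR (z : Fin m → X) : Fin m → X := fun i => z (i - 1)

/-- The coordinatewise resolvent `J_A` on `X^m`. -/
def resProd (J : Fin m → X → X) (z : Fin m → X) : Fin m → X := fun i => J i (z i)

/-- The product operator `A = A_1 × ⋯ × A_m` on `X^m`. -/
def prodOp (A : Fin m → X → Set X) : (Fin m → X) → Set (Fin m → X) :=
  fun z => {u | ∀ i, u i ∈ A i (z i)}

/-- The set of cycles `Z = Fix (J_A ∘ R)`. -/
def cycleSet (J : Fin m → X → X) : Set (Fin m → X) :=
  {z | resProd J (shiftR z) = z}

/-!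
Resolvents of monotone operators are firmly nonexpansive, so at a common fixed point `d` every
`J i` satisfies `‖J x - x‖² + ‖J x - d‖² ≤ ‖x - d‖²`. Hence no factor of a composition can
increase the distance to `d`, and a point fixed by the composition cannot be moved by any factor.
Along a cycle `z i = J i (z (i - 1))` the squared steps are bounded by the decrements of
`‖z i - d‖²`, which telescope to `0` around the cycle; so all steps vanish and the cycle is
constant.
-/

/-- The inequality a firmly nonexpansive map satisfies at each of its fixed points `d`. -/
def QuasiFirmlyNonexpansiveAt {E : Type*} [MetricSpace E] (f : E → E) (d : E) : Prop :=
  ∀ x, dist (f x) x ^ 2 + dist (f x) d ^ 2 ≤ dist x d ^ 2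

namespace QuasiFirmlyNonexpansiveAt

variable {E ι : Type*} [MetricSpace E] {d : E}

theorem dist_le {f : E → E} (hf : QuasiFirmlyNonexpansiveAt f d) (x : E) :
    dist (f x) d ≤ dist x d := by
  have := hf x
  nlinarith [sq_nonneg (dist (f x) x), dist_nonneg (x := f x) (y := d),
    dist_nonneg (x := x) (y := d)]

theorem eq_of_dist_le {f : E → E} (hf : QuasiFirmlyNonexpansiveAt f d) {x : E}
    (hx : dist x d ≤ dist (f x) d) : f x = x := by
  have := hf x
  have hmove : dist (f x) x ^ 2 ≤ 0 := by
    nlinarith [dist_nonneg (x := x) (y := d), dist_nonneg (x := f x) (y := d)]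
  exact dist_eq_zero.mp (pow_eq_zero_iff two_ne_zero |>.mp (le_antisymm hmove (sq_nonneg _)))

theorem dist_foldl_le {f : ι → E → E} (hf : ∀ k, QuasiFirmlyNonexpansiveAt (f k) d)
    (l : List ι) (x : E) : dist (l.foldl (fun y k => f k y) x) d ≤ dist x d := by
  induction l generalizing x with
  | nil => rfl
  | cons a l ih => exact (ih (f a x)).trans ((hf a).dist_le x)

theorem forall_mem_eq_of_foldl_eq {f : ι → E → E} (hf : ∀ k, QuasiFirmlyNonexpansiveAt (f k) d)
    {l : List ι} {x : E} (hx : l.foldl (fun y k => f k y) x = x) : ∀ k ∈ l, f k x = x := by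
  induction l generalizing x with
  | nil => simp
  | cons a l ih =>
    rw [List.foldl_cons] at hx
    have ha : f a x = x := (hf a).eq_of_dist_le <| by
      calc dist x d = dist (l.foldl (fun y k => f k y) (f a x)) d := by rw [hx]
        _ ≤ dist (f a x) d := dist_foldl_le hf l (f a x)
    rw [ha] at hx
    simpa [ha] using ih hx

theorem cycle_apply_eq_apply_sub_one {m : ℕ} [NeZero m] {f : Fin m → E → E}
    (hf : ∀ i, QuasiFirmlyNonexpansiveAt (f i) d) {z : Fin m → E}
    (hz : ∀ i, f i (z (i - 1)) = z i) (i : Fin m) : z i = z (i - 1) := by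
  have hstep : ∀ i, dist (z i) (z (i - 1)) ^ 2 ≤ dist (z (i - 1)) d ^ 2 - dist (z i) d ^ 2 := by
    intro i
    have := hf i (z (i - 1))
    rw [hz i] at this
    linarith
  have htelescope : ∑ i, (dist (z (i - 1)) d ^ 2 - dist (z i) d ^ 2) = 0 := by
    rw [Finset.sum_sub_distrib, sub_eq_zero]
    exact Equiv.sum_comp (Equiv.subRight 1) (fun j => dist (z j) d ^ 2)
  have hsum : ∑ i, dist (z i) (z (i - 1)) ^ 2 = 0 :=
    le_antisymm (htelescope ▸ Finset.sum_le_sum fun i _ => hstep i)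
      (Finset.sum_nonneg fun i _ => sq_nonneg _)
  have hi := (Finset.sum_eq_zero_iff_of_nonneg fun i _ => sq_nonneg _).mp hsum i
    (Finset.mem_univ i)
  exact dist_eq_zero.mp (pow_eq_zero_iff two_ne_zero |>.mp hi)

end QuasiFirmlyNonexpansiveAt

theorem IsResolventOf.quasiFirmlyNonexpansiveAt {J : X → X} {A : X → Set X}
    (hA : SVMonotone A) (hJ : IsResolventOf J A) {d : X} (hd : J d = d) :
    QuasiFirmlyNonexpansiveAt J d := by
  intro x
  have hx : x - J x ∈ A (J x) := (hJ (J x) x).mp rfl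
  have hd' : d - d ∈ A d := (hJ d d).mp hd
  have hmono := hA hx hd'
  rw [sub_self, sub_zero] at hmono
  rw [dist_comm (J x) x, dist_eq_norm, dist_eq_norm, dist_eq_norm,
    show x - d = (J x - d) + (x - J x) by abel, norm_add_sq_real]
  linarith

open Fin.NatCast in
theorem Fin.apply_eq_apply_zero_of_apply_sub_one {α : Type*} {m : ℕ} [NeZero m] {z : Fin m → α}
    (h : ∀ i, z i = z (i - 1)) (i : Fin m) : z i = z 0 := by
  have hnat : ∀ n : ℕ, z n = z 0 := by
    intro n
    induction n with
    | zero => simp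
    | succ n ih => rw [← ih, h, Nat.cast_succ, add_sub_cancel_right]
  simpa using hnat i

theorem setOf_exists_eq_const_eq_inter {ι α : Type*} [Nonempty ι] (D : Set α) :
    {z : ι → α | ∃ x ∈ D, z = fun _ => x} = {z | ∀ i, z i ∈ D} ∩ {z | ∀ i j, z i = z j} := by
  ext z
  constructor
  · rintro ⟨x, hx, rfl⟩
    exact ⟨fun _ => hx, fun _ _ => rfl⟩
  · rintro ⟨hD, hconst⟩
    obtain ⟨i₀⟩ := ‹Nonempty ι›
    exact ⟨z i₀, hD i₀, funext fun i => hconst i i₀⟩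

open Fin.NatCast in
theorem cycFix_eq_iInter {E : Type*} [MetricSpace E] {J : Fin m → E → E} {d : E}
    (hJ : ∀ i, QuasiFirmlyNonexpansiveAt (J i) d) (i : Fin m) :
    cycFix J i = ⋂ j : Fin m, {x : E | J j x = x} := by
  ext x
  rw [Set.mem_iInter]
  change cyclicComp J i x = x ↔ ∀ j, J j x = x
  -- `k` elaborates at type `Fin m`: `cyclicComp` folds over `List.range m` cast into `Fin m`.
  unfold cyclicComp
  constructor
  · intro hx j
    have hfix := QuasiFirmlyNonexpansiveAt.forall_mem_eq_of_foldl_eq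
      (fun k => hJ (i + 1 + k)) hx (j - (i + 1))
      (by simpa using ⟨_, Fin.is_lt _, (Fin.cast_val_eq_self _).symm⟩)
    simpa using hfix
  · intro hx
    exact List.foldl_fixed' (fun _ => hx _) _

theorem cycleSet_eq_const {E : Type*} [MetricSpace E] {J : Fin m → E → E} {d : E}
    (hJ : ∀ i, QuasiFirmlyNonexpansiveAt (J i) d) :
    cycleSet J = {z : Fin m → E | ∃ x ∈ ⋂ i : Fin m, {x : E | J i x = x}, z = fun _ => x} := by
  ext z
  constructor
  · intro hz
    have hcycle : ∀ i, J i (z (i - 1)) = z i := congrFun hz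
    have hconst := Fin.apply_eq_apply_zero_of_apply_sub_one
      (QuasiFirmlyNonexpansiveAt.cycle_apply_eq_apply_sub_one hJ hcycle)
    refine ⟨z 0, Set.mem_iInter.mpr fun i => show J i (z 0) = z 0 from ?_, funext hconst⟩
    simpa only [hconst] using hcycle i
  · rintro ⟨x, hx, rfl⟩
    exact funext fun i => Set.mem_iInter.mp hx i

/-- If `D = ⋂ Fix J_i` is nonempty then every `F_i = D` and the set of cycles is
the set of constant (diagonal) tuples with value in `D`, i.e. `Z = D^m ∩ Δ`. -/
theorem cycFix_eq_and_cycleSet_diagonal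
    (A : Fin m → X → Set X) (J : Fin m → X → X)
    (hA : ∀ i, SVMaxMonotone (A i)) (hJ : ∀ i, IsResolventOf (J i) (A i))
    (hD : (⋂ i : Fin m, {x : X | J i x = x}).Nonempty) :
    (∀ i : Fin m, cycFix J i = ⋂ i : Fin m, {x : X | J i x = x}) ∧
    cycleSet J = {z : Fin m → X | ∃ x ∈ ⋂ i : Fin m, {x : X | J i x = x}, z = fun _ => x} ∧
    cycleSet J =
      {z : Fin m → X | ∀ i, z i ∈ ⋂ i : Fin m, {x : X | J i x = x}} ∩
        {z : Fin m → X | ∀ i j, z i = z j} := by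
  obtain ⟨d, hd⟩ := hD
  have hq : ∀ i, QuasiFirmlyNonexpansiveAt (J i) d := fun i =>
    (hJ i).quasiFirmlyNonexpansiveAt (hA i).1 (Set.mem_iInter.mp hd i)
  exact ⟨cycFix_eq_iInter hq, cycleSet_eq_const hq,
    (cycleSet_eq_const hq).trans (setOf_exists_eq_const_eq_inter _)⟩
end

section
/- The dual solution set of the pair (A, Id − R) equals (R − Id)(Z): if Z ≠ ∅ then dsol(A, Id−R) is the singleton {J_{2(A^{−1} + N_{Δ^⊥} + T)}(0)}, and if Z = ∅ then dsol(A, Id−R) = ∅. In particular, for every cycle z ∈ Z, the gap vector y = Rz − z is the same. -/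
open Pointwise InnerProductSpace

variable {X : Type*} [NormedAddCommGroup X] [InnerProductSpace ℝ X]
variable {m : ℕ} [NeZero m]

/-- The canonical inner product on the Hilbert product space `X^m`. -/
def innerP (u v : Fin m → X) : ℝ := ∑ i, ⟪u i, v i⟫_ℝ

/-- Monotonicity of a set-valued operator on the product space `X^m`. -/
def SVMonotoneP (Ap : (Fin m → X) → Set (Fin m → X)) : Prop :=
  ∀ ⦃z w u v : Fin m → X⦄, u ∈ Ap z → v ∈ Ap w → 0 ≤ innerP (z - w) (u - v)

/-- Maximal monotonicity on the product space `X^m`. -/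
def SVMaxMonotoneP (Ap : (Fin m → X) → Set (Fin m → X)) : Prop :=
  SVMonotoneP Ap ∧
    ∀ z u : Fin m → X, (∀ w v, v ∈ Ap w → 0 ≤ innerP (z - w) (u - v)) → u ∈ Ap z

/-- Set-valued inverse on the product space. -/
def SVInvP (Ap : (Fin m → X) → Set (Fin m → X)) : (Fin m → X) → Set (Fin m → X) :=
  fun u => {z | u ∈ Ap z}

/-- The diagonal `Δ` of `X^m`. -/
def diagP : Set (Fin m → X) := {z | ∀ i j, z i = z j}

/-- The orthogonal complement `Δ^⊥` of the diagonal in the product Hilbert space. -/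
def diagPerp : Set (Fin m → X) :=
  {y : Fin m → X | ∀ z ∈ diagP (X := X) (m := m), innerP y z = 0}

/-- The normal cone operator of a set `C ⊆ X^m`. -/
def normalConeP (C : Set (Fin m → X)) : (Fin m → X) → Set (Fin m → X) :=
  fun x => {u | x ∈ C ∧ ∀ w ∈ C, innerP u (w - x) ≤ 0}

/-!
A dual solution `y` splits `0 = a + b` with `y ∈ A a` and `y = b - R b`; hence `b = -a`,
`y = R a - a ∈ A a`, i.e. `a` is a cycle and `y` its gap. Conversely every gap is a dual
solution. The gap does not depend on the cycle: `Id - R` satisfies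
`2 ⟪d, d - R d⟫ = ‖d - R d‖²` since `R` is an isometry, so for cycles `z, w` and `d = z - w`
monotonicity of `A` gives `0 ≤ ⟪d, R d - d⟫ = -½ ‖d - R d‖²`, whence `R d = d`.
Finally, the resolvent inclusion for `y₀` together with the formula for `(Id - R)⁻¹` says
exactly that `y₀` is a dual solution, so the dual solution set is `{y₀}` or empty.
-/

section innerP

omit [NeZero m]

lemma innerP_comm (u v : Fin m → X) : innerP u v = innerP v u := by
  simp only [innerP, real_inner_comm]

lemma innerP_sub_left (u v w : Fin m → X) : innerP (u - v) w = innerP u w - innerP v w := by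
  simp only [innerP, Pi.sub_apply, inner_sub_left, Finset.sum_sub_distrib]

lemma innerP_sub_right (u v w : Fin m → X) : innerP u (v - w) = innerP u v - innerP u w := by
  simp only [innerP, Pi.sub_apply, inner_sub_right, Finset.sum_sub_distrib]

lemma innerP_self_eq_zero {u : Fin m → X} : innerP u u = 0 ↔ u = 0 := by
  rw [innerP, Finset.sum_eq_zero_iff_of_nonneg fun i _ => real_inner_self_nonneg, funext_iff]
  simp only [Finset.mem_univ, true_implies, inner_self_eq_zero, Pi.zero_apply]

lemma innerP_self_nonneg (u : Fin m → X) : 0 ≤ innerP u u :=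
  Finset.sum_nonneg fun _ _ => real_inner_self_nonneg

end innerP

lemma innerP_shiftR_shiftR (u v : Fin m → X) : innerP (shiftR u) (shiftR v) = innerP u v :=
  Fintype.sum_equiv (Equiv.subRight 1) _ _ fun _ => rfl

lemma two_mul_innerP_sub_shiftR (d : Fin m → X) :
    2 * innerP d (d - shiftR d) = innerP (d - shiftR d) (d - shiftR d) := by
  simp only [innerP_sub_left, innerP_sub_right, innerP_shiftR_shiftR, innerP_comm (shiftR d) d]
  ring

lemma shiftR_eq_self_of_innerP_nonneg {d : Fin m → X} (h : 0 ≤ innerP d (shiftR d - d)) :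
    shiftR d = d := by
  have hflip : innerP d (shiftR d - d) = -innerP d (d - shiftR d) := by
    simp only [innerP_sub_right]; ring
  have hzero : innerP (d - shiftR d) (d - shiftR d) = 0 := by
    linarith [two_mul_innerP_sub_shiftR d, innerP_self_nonneg (d - shiftR d)]
  exact (sub_eq_zero.mp (innerP_self_eq_zero.mp hzero)).symm

omit [InnerProductSpace ℝ X] in
lemma mem_cycleSet_iff {A : Fin m → X → Set X} {J : Fin m → X → X}
    (hJ : ∀ i, IsResolventOf (J i) (A i)) {z : Fin m → X} :
    z ∈ cycleSet J ↔ shiftR z - z ∈ prodOp A z := by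
  simp only [cycleSet, Set.mem_ofPred_eq, prodOp, funext_iff, resProd, shiftR, Pi.sub_apply,
    hJ _ _ _]

lemma shiftR_sub_self_eq_of_mem_cycleSet {A : Fin m → X → Set X} {J : Fin m → X → X}
    (hA : SVMonotoneP (prodOp A)) (hJ : ∀ i, IsResolventOf (J i) (A i))
    {z w : Fin m → X} (hz : z ∈ cycleSet J) (hw : w ∈ cycleSet J) :
    shiftR z - z = shiftR w - w := by
  have hmono := hA ((mem_cycleSet_iff hJ).mp hz) ((mem_cycleSet_iff hJ).mp hw)
  have hshift : shiftR z - z - (shiftR w - w) = shiftR (z - w) - (z - w) := by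
    funext i; simp only [shiftR, Pi.sub_apply]; abel
  rw [hshift] at hmono
  have hfix := congrFun (shiftR_eq_self_of_innerP_nonneg hmono)
  funext i
  simpa [shiftR, sub_eq_sub_iff_sub_eq_sub] using hfix i

omit [InnerProductSpace ℝ X] in
lemma zero_mem_dualSol_iff {A : Fin m → X → Set X} {J : Fin m → X → X}
    (hJ : ∀ i, IsResolventOf (J i) (A i)) {y : Fin m → X} :
    (0 : Fin m → X) ∈ SVInvP (prodOp A) y + SVInvP (fun z => {z - shiftR z}) y ↔
      y ∈ (fun z => shiftR z - z) '' cycleSet J := by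
  simp only [Set.mem_add, SVInvP, Set.mem_ofPred_eq, Set.mem_singleton_iff, Set.mem_image,
    mem_cycleSet_iff hJ]
  constructor
  · rintro ⟨a, ha, b, rfl, hab⟩
    have hb : b = -a := eq_neg_of_add_eq_zero_right hab
    subst hb
    have hy : -a - shiftR (-a) = shiftR a - a := by
      funext i; simp only [shiftR, Pi.sub_apply, Pi.neg_apply]; abel
    exact ⟨a, hy ▸ ha, hy.symm⟩
  · rintro ⟨a, ha, rfl⟩
    refine ⟨a, ha, -a, ?_, add_neg_cancel a⟩
    funext i; simp only [shiftR, Pi.sub_apply, Pi.neg_apply]; abel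

lemma zero_mem_dualSol_of_mem_resolvent {A : Fin m → X → Set X} {T : (Fin m → X) → (Fin m → X)}
    {y₀ : Fin m → X}
    (hT : SVInvP (fun z => ({z - shiftR z} : Set (Fin m → X))) =
      fun y => normalConeP diagPerp y + ({(2 : ℝ)⁻¹ • y + T y} : Set (Fin m → X)))
    (hy₀ : -y₀ ∈ (2 : ℝ) • (SVInvP (prodOp A) y₀ + normalConeP diagPerp y₀ + {T y₀})) :
    (0 : Fin m → X) ∈ SVInvP (prodOp A) y₀ + SVInvP (fun z => {z - shiftR z}) y₀ := by
  obtain ⟨_, ⟨_, ⟨a, ha, n, hn, rfl⟩, _, rfl, rfl⟩, hsum⟩ := hy₀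
  have hneg : n + ((2 : ℝ)⁻¹ • y₀ + T y₀) = -a := by
    linear_combination (norm := module) (2 : ℝ)⁻¹ • hsum
  refine ⟨a, ha, -a, ?_, add_neg_cancel a⟩
  rw [hT]
  exact ⟨n, hn, _, rfl, hneg⟩

/-- `dsol (A, Id − R) = (R − Id) Z`; it is the singleton
`{J_{2(A⁻¹ + N_{Δ^⊥} + T)} 0}` when `Z ≠ ∅` and empty when `Z = ∅`.
In particular the gap vector `R z − z` is independent of the cycle `z ∈ Z`. -/
theorem dsol_displacement
    (A : Fin m → X → Set X) (J : Fin m → X → X) (T : (Fin m → X) → (Fin m → X))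
    (y₀ : Fin m → X)
    (hA : SVMaxMonotoneP (prodOp A)) (hJ : ∀ i, IsResolventOf (J i) (A i))
    -- the inverse displacement identity `(Id − R)⁻¹ = N_{Δ^⊥} + (1/2) Id + T`
    (hT : SVInvP (fun z => ({z - shiftR z} : Set (Fin m → X))) =
      fun y => normalConeP diagPerp y + ({(2 : ℝ)⁻¹ • y + T y} : Set (Fin m → X)))
    -- `y₀ = J_{2(A⁻¹ + N_{Δ^⊥} + T)} (0)`
    (hy₀ : -y₀ ∈
      (2 : ℝ) • (SVInvP (prodOp A) y₀ + normalConeP diagPerp y₀ +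
        ({T y₀} : Set (Fin m → X)))) :
    {y : Fin m → X |
        (0 : Fin m → X) ∈ SVInvP (prodOp A) y +
          SVInvP (fun z => ({z - shiftR z} : Set (Fin m → X))) y} =
      (fun z => shiftR z - z) '' cycleSet J ∧
    ((cycleSet J).Nonempty →
      {y : Fin m → X |
          (0 : Fin m → X) ∈ SVInvP (prodOp A) y +
            SVInvP (fun z => ({z - shiftR z} : Set (Fin m → X))) y} = {y₀}) ∧
    (cycleSet J = ∅ →
      {y : Fin m → X |
          (0 : Fin m → X) ∈ SVInvP (prodOp A) y +
            SVInvP (fun z => ({z - shiftR z} : Set (Fin m → X))) y} = ∅) ∧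
    (∀ z ∈ cycleSet J, ∀ w ∈ cycleSet J, shiftR z - z = shiftR w - w) := by
  have hdsol : {y : Fin m → X | (0 : Fin m → X) ∈ SVInvP (prodOp A) y +
      SVInvP (fun z => ({z - shiftR z} : Set (Fin m → X))) y} =
      (fun z => shiftR z - z) '' cycleSet J :=
    Set.ext fun _ => zero_mem_dualSol_iff hJ
  have hgap : ∀ z ∈ cycleSet J, ∀ w ∈ cycleSet J, shiftR z - z = shiftR w - w :=
    fun _ hz _ hw => shiftR_sub_self_eq_of_mem_cycleSet hA.1 hJ hz hw
  obtain ⟨z₀, hz₀, rfl⟩ :=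
    (zero_mem_dualSol_iff hJ).mp (zero_mem_dualSol_of_mem_resolvent hT hy₀)
  refine ⟨hdsol, fun _ => ?_, fun hZ => by rw [hdsol, hZ, Set.image_empty], hgap⟩
  rw [hdsol, Set.eq_singleton_iff_unique_mem]
  exact ⟨⟨z₀, hz₀, rfl⟩, fun _ ⟨z, hz, hy⟩ => hy ▸ hgap z hz z₀ hz₀⟩
end
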